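/- Let r₁, r₂ > 0 and θ₂, β ∈ ℝ, set c = e^{iβ}, and let A₁, A₃ be the coefficients of z and z³ in the polynomial P(z) = (z - r₁)(z + 1/r₁)(z - r₂e^{iθ₂})(z + e^{iθ₂}/r₂). Then, writing R(r) = r - 1/r, one has conj(c·A₁) + c·A₃ = -2i·[R(r₁)·e^{-iθ₂} + R(r₂)]·sin(β + θ₂). -/

import Mathlib

open Polynomial

/-- `R(r) = r - 1/r`. -/
noncomputable def RR (r : ℝ) : ℝ := r - 1 / r

/-!
Each quadratic factor has roots `r t` and `-t / r` with `|t| = 1` (`t = 1` for the first,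
`t = e^{iθ₂}` for the second), so it equals `X² - R(r) t X - t²`, and the coefficients are
`A₃ = -(R(r₁) + R(r₂) t)` and `A₁ = R(r₁) t² + R(r₂) t`. Using `t̄ t = 1`, the combination
`conj(c A₁) + c A₃` factors as `(R(r₁) t̄ + R(r₂)) (conj(c t) - c t)`, and
`conj(c t) - c t = e^{-i(β+θ₂)} - e^{i(β+θ₂)} = -2i sin(β + θ₂)`.
-/

section Quartic

variable {R : Type*} [CommRing R] (a a' b b' : R)

lemma quartic_expansion :
    (X - C a) * (X + C a') * (X - C b) * (X + C b') =
      X ^ 4 + C ((a' - a) + (b' - b)) * X ^ 3 +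
        C (-(a * a') - b * b' + (a' - a) * (b' - b)) * X ^ 2 +
        C (-((a' - a) * (b * b') + (b' - b) * (a * a'))) * X + C (a * a' * (b * b')) := by
  simp only [C_sub, C_add, C_mul, C_neg]
  ring

lemma coeff_three_quartic :
    ((X - C a) * (X + C a') * (X - C b) * (X + C b')).coeff 3 = (a' - a) + (b' - b) := by
  rw [quartic_expansion]
  simp only [coeff_add, coeff_C_mul, coeff_X_pow, coeff_X, coeff_C]
  norm_num

lemma coeff_one_quartic :
    ((X - C a) * (X + C a') * (X - C b) * (X + C b')).coeff 1 =
      -((a' - a) * (b * b') + (b' - b) * (a * a')) := by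
  rw [quartic_expansion]
  simp only [coeff_add, coeff_C_mul, coeff_X_pow, coeff_X, coeff_C]
  norm_num

end Quartic

lemma conj_exp_ofReal_mul_I (x : ℝ) :
    starRingEnd ℂ (Complex.exp (x * Complex.I)) = Complex.exp (-x * Complex.I) := by
  rw [← Complex.exp_conj, map_mul, Complex.conj_ofReal, Complex.conj_I, neg_mul, mul_neg]

lemma conj_exp_ofReal_mul_I_sub (x : ℝ) :
    starRingEnd ℂ (Complex.exp (x * Complex.I)) - Complex.exp (x * Complex.I) =
      -2 * Complex.I * (Real.sin x : ℂ) := by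
  rw [conj_exp_ofReal_mul_I, Complex.ofReal_sin]
  linear_combination Complex.I * Complex.two_sin (x : ℂ) +
    (Complex.exp (-x * Complex.I) - Complex.exp (x * Complex.I)) * Complex.I_sq

lemma first_period_combination_eq (R₁ R₂ : ℝ) (c t : ℂ) (ht : starRingEnd ℂ t * t = 1) :
    starRingEnd ℂ (c * ((R₁ : ℂ) * t ^ 2 + R₂ * t)) + c * -((R₁ : ℂ) + R₂ * t) =
      ((R₁ : ℂ) * starRingEnd ℂ t + R₂) * (starRingEnd ℂ (c * t) - c * t) := by
  simp only [map_mul, map_add, map_pow, Complex.conj_ofReal]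
  linear_combination (R₁ : ℂ) * c * ht

theorem first_period_identity_complexity_one
    (r₁ r₂ : ℝ) (hr₁ : 0 < r₁) (hr₂ : 0 < r₂) (θ₂ β : ℝ)
    (c : ℂ) (hc : c = Complex.exp (β * Complex.I))
    (P : Polynomial ℂ)
    (hP : P = (X - C (r₁ : ℂ)) * (X + C (1 / (r₁ : ℂ))) *
      (X - C ((r₂ : ℂ) * Complex.exp (θ₂ * Complex.I))) *
      (X + C (Complex.exp (θ₂ * Complex.I) / (r₂ : ℂ)))) :
    (starRingEnd ℂ) (c * P.coeff 1) + c * P.coeff 3 =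
      -2 * Complex.I *
        ((RR r₁ : ℂ) * Complex.exp (-θ₂ * Complex.I) + (RR r₂ : ℂ)) *
        (Real.sin (β + θ₂) : ℂ) := by
  have hr₁' : (r₁ : ℂ) ≠ 0 := by exact_mod_cast hr₁.ne'
  have hr₂' : (r₂ : ℂ) ≠ 0 := by exact_mod_cast hr₂.ne'
  set t := Complex.exp (θ₂ * Complex.I) with ht
  have hconj_t : starRingEnd ℂ t = Complex.exp (-θ₂ * Complex.I) := conj_exp_ofReal_mul_I θ₂
  have ht_unit : starRingEnd ℂ t * t = 1 := by
    rw [hconj_t, ht, ← Complex.exp_add, neg_mul, neg_add_cancel, Complex.exp_zero]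
  have hA₃ : P.coeff 3 = -((RR r₁ : ℂ) + RR r₂ * t) := by
    rw [hP, coeff_three_quartic]
    push_cast [RR]
    ring
  have hA₁ : P.coeff 1 = (RR r₁ : ℂ) * t ^ 2 + RR r₂ * t := by
    rw [hP, coeff_one_quartic]
    push_cast [RR]
    field_simp
    ring
  have hct : c * t = Complex.exp ((β + θ₂ : ℝ) * Complex.I) := by
    rw [hc, ht, ← Complex.exp_add]
    push_cast
    ring_nf
  rw [hA₁, hA₃, first_period_combination_eq _ _ _ _ ht_unit, hct, conj_exp_ofReal_mul_I_sub,
    hconj_t]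
  ring
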